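/- arXiv:2104.04338 — 11 statements merged into one kernel-verified Lean document; each statement's English description precedes it below -/
import Mathlib

section
/- Let a, c be nonnegative integers with a ≤ c, and suppose integers b, d satisfy 0 ≤ b, 0 ≤ d, a − b ≥ 0, a − b + c − d ≥ 0, 2(a − b) ≤ d and 3b + d − a ≤ c. Define b' = b and d' = 3a − 5b + c − d. Then the pair (b', d') again satisfies 2(a − b') ≤ d' and 3b' + d' − a ≤ c, and applying the same map to (b', d') returns (b, d). -/
theorem stmt_3 (a c b d : ℤ) (ha : 0 ≤ a) (hc : 0 ≤ c) (hac : a ≤ c)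
    (hb : 0 ≤ b) (hd : 0 ≤ d) (h1 : 0 ≤ a - b) (h2 : 0 ≤ a - b + c - d)
    (hL1 : 2 * (a - b) ≤ d) (hL2 : 3 * b + d - a ≤ c)
    (b' d' : ℤ) (hb' : b' = b) (hd' : d' = 3 * a - 5 * b + c - d) :
    (2 * (a - b') ≤ d' ∧ 3 * b' + d' - a ≤ c) ∧
      (b' = b ∧ 3 * a - 5 * b' + c - d' = d) := by subst hb' hd'; constructor; constructor <;> omega; omega
end

section
/- Let a, c be nonnegative integers with a ≤ c, and suppose integers b, d satisfy 0 ≤ b, 0 ≤ d, a − b ≥ 0, a − b + c − d ≥ 0, 2(a − b) ≤ d and 3b + d − a > c. Let X = 1 if a − b + c − d is odd and X = 0 otherwise, and define b' = (a − b + c − d − X)/2 and d' = 2a − 2b + X. Then 2(a − b') > d' and 2b' + ⌈d'/2⌉ ≤ c. -/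
theorem stmt_6 (a c b d : ℤ) (ha : 0 ≤ a) (hc : 0 ≤ c) (hac : a ≤ c)
    (hb : 0 ≤ b) (hd : 0 ≤ d) (h1 : 0 ≤ a - b) (h2 : 0 ≤ a - b + c - d)
    (hL1 : 2 * (a - b) ≤ d) (hL2 : 3 * b + d - a > c)
    (X : ℤ) (hX : X = if Odd (a - b + c - d) then 1 else 0)
    (b' d' : ℤ) (hb' : 2 * b' = a - b + c - d - X) (hd' : d' = 2 * a - 2 * b + X) :
    2 * (a - b') > d' ∧ 2 * b' + ⌈(d' : ℚ) / 2⌉ ≤ c := by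
  have hX01 : X = 0 ∨ X = 1 := by rw [hX]; split <;> simp
  have hceil : ⌈(d' : ℚ) / 2⌉ = a - b + X := by
    rw [Int.ceil_eq_iff]
    rcases hX01 with h | h <;> subst h <;> subst hd' <;> constructor <;> push_cast <;> linarith
  constructor
  · linarith
  · rw [hceil]; linarith
end

section
/- Let a, c be nonnegative integers with a ≤ c, and suppose integers b, d satisfy 0 ≤ b, 0 ≤ d, a − b ≥ 0, a − b + c − d ≥ 0, 2(a − b) ≤ d and 3b + d − a > c. Let X = 1 if a − b + c − d is odd and X = 0 otherwise, and set b' = (a − b + c − d − X)/2, d' = 2a − 2b + X. Then 2a − 2b' + c − d' = 3b + d − a and 2b' + ⌈d'/2⌉ = 2a − 2b + c − d. -/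
theorem stmt_7 (a c b d : ℤ) (ha : 0 ≤ a) (hc : 0 ≤ c) (hac : a ≤ c)
    (hb : 0 ≤ b) (hd : 0 ≤ d) (h1 : 0 ≤ a - b) (h2 : 0 ≤ a - b + c - d)
    (hL1 : 2 * (a - b) ≤ d) (hL2 : 3 * b + d - a > c)
    (X : ℤ) (hX : X = if Odd (a - b + c - d) then 1 else 0)
    (b' d' : ℤ) (hb' : 2 * b' = a - b + c - d - X) (hd' : d' = 2 * a - 2 * b + X) :
    2 * a - 2 * b' + c - d' = 3 * b + d - a ∧
      2 * b' + ⌈(d' : ℚ) / 2⌉ = 2 * a - 2 * b + c - d := by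
  have hX01 : X = 0 ∨ X = 1 := by
    rw [hX]; split <;> simp
  have hceil : ⌈(d' : ℚ) / 2⌉ = a - b + X := by
    rcases hX01 with h | h
    · have : d' = 2 * (a - b) := by omega
      rw [this, h]
      push_cast
      rw [mul_comm, mul_div_assoc]
      norm_num
    · have : d' = 2 * (a - b) + 1 := by omega
      rw [this, h]
      have h2' : ((2 * (a - b) + 1 : ℤ) : ℚ) / 2 = 1 / 2 + ((a - b : ℤ) : ℚ) := by
        push_cast; ring
      rw [h2', Int.ceil_add_intCast]
      have hc1 : ⌈(1:ℚ)/2⌉ = 1 := by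
        rw [Int.ceil_eq_iff]; norm_num
      rw [hc1]; ring
  constructor
  · omega
  · omega
end

section
/- Let a, c be nonnegative integers with a ≤ c, and suppose integers b, d satisfy 0 ≤ b, 0 ≤ d, a − b ≥ 0, a − b + c − d ≥ 0, 2(a − b) > d and 2b + ⌈d/2⌉ ≤ c. Define b' = a − ⌊d/2⌋ and d' = 2d − 2b + c − 3⌈d/2⌉. Then a − b' ≥ 0, a − b' + c − d' ≥ 0, 2(a − b') ≤ d', and 3b' + d' − a > c. -/
theorem stmt_8 (a c b d : ℤ) (ha : 0 ≤ a) (hc : 0 ≤ c) (hac : a ≤ c)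
    (hb : 0 ≤ b) (hd : 0 ≤ d) (h1 : 0 ≤ a - b) (h2 : 0 ≤ a - b + c - d)
    (hL1 : 2 * (a - b) > d) (hL2 : 2 * b + ⌈(d : ℚ) / 2⌉ ≤ c)
    (b' d' : ℤ) (hb' : b' = a - ⌊(d : ℚ) / 2⌋)
    (hd' : d' = 2 * d - 2 * b + c - 3 * ⌈(d : ℚ) / 2⌉) :
    0 ≤ a - b' ∧ 0 ≤ a - b' + c - d' ∧ 2 * (a - b') ≤ d' ∧ 3 * b' + d' - a > c := by
  set f : ℤ := ⌊(d : ℚ) / 2⌋ with hf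
  set g : ℤ := ⌈(d : ℚ) / 2⌉ with hg
  have h3 : (f : ℚ) ≤ (d : ℚ) / 2 := Int.floor_le _
  have h4 : (d : ℚ) / 2 < f + 1 := Int.lt_floor_add_one _
  have h5 : (d : ℚ) / 2 ≤ g := Int.le_ceil _
  have h6 : (g : ℚ) < (d : ℚ) / 2 + 1 := Int.ceil_lt_add_one _
  have hA : 2 * f ≤ d := by exact_mod_cast (by push_cast; linarith : ((2 * f : ℤ) : ℚ) ≤ ((d : ℤ) : ℚ))
  have hB : d < 2 * f + 2 := by exact_mod_cast (by push_cast; linarith : ((d : ℤ) : ℚ) < ((2 * f + 2 : ℤ) : ℚ))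
  have hC : d ≤ 2 * g := by exact_mod_cast (by push_cast; linarith : ((d : ℤ) : ℚ) ≤ ((2 * g : ℤ) : ℚ))
  have hD : 2 * g - 2 < d := by exact_mod_cast (by push_cast; linarith : ((2 * g - 2 : ℤ) : ℚ) < ((d : ℤ) : ℚ))
  have hfg : f + g = d := by omega
  refine ⟨by omega, by omega, by omega, by omega⟩
end

section
/- Let a, c be nonnegative integers with a ≤ c, and suppose integers b, d satisfy 0 ≤ b, 0 ≤ d, a − b ≥ 0, a − b + c − d ≥ 0, 2(a − b) > d and 2b + ⌈d/2⌉ ≤ c. Define b' = a − ⌊d/2⌋ and d' = 2d − 2b + c − 3⌈d/2⌉. Then 2a − 2b' + c − d' = 2b + ⌈d/2⌉ and 3b' + d' − a = 2a − 2b + c − d. -/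
theorem stmt_9 (a c b d : ℤ) (ha : 0 ≤ a) (hc : 0 ≤ c) (hac : a ≤ c)
    (hb : 0 ≤ b) (hd : 0 ≤ d) (h1 : 0 ≤ a - b) (h2 : 0 ≤ a - b + c - d)
    (hL1 : 2 * (a - b) > d) (hL2 : 2 * b + ⌈(d : ℚ) / 2⌉ ≤ c)
    (b' d' : ℤ) (hb' : b' = a - ⌊(d : ℚ) / 2⌋)
    (hd' : d' = 2 * d - 2 * b + c - 3 * ⌈(d : ℚ) / 2⌉) :
    2 * a - 2 * b' + c - d' = 2 * b + ⌈(d : ℚ) / 2⌉ ∧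
      3 * b' + d' - a = 2 * a - 2 * b + c - d := by
  have key : ⌊(d : ℚ) / 2⌋ + ⌈(d : ℚ) / 2⌉ = d := by
    rcases Int.even_or_odd d with ⟨k, hk⟩ | ⟨k, hk⟩
    · subst hk
      have h1 : ((k + k : ℤ) : ℚ) / 2 = (k : ℚ) := by push_cast; ring
      rw [h1, Int.floor_intCast, Int.ceil_intCast]
    · subst hk
      have h1 : ((2 * k + 1 : ℤ) : ℚ) / 2 = (k : ℚ) + 1/2 := by push_cast; ring
      have hf : ⌊(k:ℚ)+1/2⌋ = k := by rw [Int.floor_eq_iff]; norm_num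
      have hcc : ⌈(k:ℚ)+1/2⌉ = k+1 := by rw [Int.ceil_eq_iff] <;> push_cast <;> norm_num
      rw [h1, hf, hcc]; ring
  constructor <;> omega
end

section
/- Let a, c be nonnegative integers with a ≤ c, and suppose integers b, d satisfy 0 ≤ b, 0 ≤ d, a − b ≥ 0, a − b + c − d ≥ 0, 2(a − b) > d and 2b + ⌈d/2⌉ > c. Let Y = 1 if c + ⌈d/2⌉ is odd and Y = 0 otherwise, and define b' = a − b − d + (c + ⌈d/2⌉ − Y)/2 and d' = 2⌊d/2⌋ + Y. Then a − b' > 0, a − b' + c − d' > 0, 2(a − b') > d', and 2b' + ⌈d'/2⌉ > c. -/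
lemma half_bounds (n : ℤ) :
    2 * ⌊(n : ℚ) / 2⌋ ≤ n ∧ n ≤ 2 * ⌊(n : ℚ) / 2⌋ + 1 ∧
    n ≤ 2 * ⌈(n : ℚ) / 2⌉ ∧ 2 * ⌈(n : ℚ) / 2⌉ ≤ n + 1 := by
  have h1 : (⌊(n : ℚ) / 2⌋ : ℚ) ≤ (n : ℚ) / 2 := Int.floor_le _
  have h2 : (n : ℚ) / 2 < ⌊(n : ℚ) / 2⌋ + 1 := Int.lt_floor_add_one _
  have h3 : (n : ℚ) / 2 ≤ (⌈(n : ℚ) / 2⌉ : ℚ) := Int.le_ceil _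
  have h4 : (⌈(n : ℚ) / 2⌉ : ℚ) < (n : ℚ) / 2 + 1 := Int.ceil_lt_add_one _
  refine ⟨?_, ?_, ?_, ?_⟩
  · have : ((2 * ⌊(n : ℚ) / 2⌋ : ℤ) : ℚ) ≤ ((n : ℤ) : ℚ) := by push_cast; linarith
    exact_mod_cast this
  · have : ((n : ℤ) : ℚ) < ((2 * ⌊(n : ℚ) / 2⌋ + 2 : ℤ) : ℚ) := by push_cast; linarith
    have := (by exact_mod_cast this : n < 2 * ⌊(n : ℚ) / 2⌋ + 2); omega
  · have : ((n : ℤ) : ℚ) ≤ ((2 * ⌈(n : ℚ) / 2⌉ : ℤ) : ℚ) := by push_cast; linarith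
    exact_mod_cast this
  · have : ((2 * ⌈(n : ℚ) / 2⌉ : ℤ) : ℚ) < ((n + 2 : ℤ) : ℚ) := by push_cast; linarith
    have := (by exact_mod_cast this : 2 * ⌈(n : ℚ) / 2⌉ < n + 2); omega

theorem stmt_10 (a c b d : ℤ) (ha : 0 ≤ a) (hc : 0 ≤ c) (hac : a ≤ c)
    (hb : 0 ≤ b) (hd : 0 ≤ d) (h1 : 0 ≤ a - b) (h2 : 0 ≤ a - b + c - d)
    (hL1 : 2 * (a - b) > d) (hL2 : 2 * b + ⌈(d : ℚ) / 2⌉ > c)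
    (Y : ℤ) (hY : Y = if Odd (c + ⌈(d : ℚ) / 2⌉) then 1 else 0)
    (b' d' : ℤ) (hb' : 2 * b' = 2 * (a - b - d) + (c + ⌈(d : ℚ) / 2⌉ - Y))
    (hd' : d' = 2 * ⌊(d : ℚ) / 2⌋ + Y) :
    0 < a - b' ∧ 0 < a - b' + c - d' ∧ 2 * (a - b') > d' ∧ 2 * b' + ⌈(d' : ℚ) / 2⌉ > c := by
  obtain ⟨hf1, hf2, he1, he2⟩ := half_bounds d
  obtain ⟨hf1', hf2', he1', he2'⟩ := half_bounds d'
  set e := ⌈(d : ℚ) / 2⌉ with hedef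
  set f := ⌊(d : ℚ) / 2⌋ with hfdef
  set e' := ⌈(d' : ℚ) / 2⌉ with he'def
  have hY2 : (Odd (c + e) ∧ Y = 1) ∨ (Even (c + e) ∧ Y = 0) := by
    rcases Int.even_or_odd (c + e) with hpar | hpar
    · right; exact ⟨hpar, by simp [hY, Int.not_odd_iff_even.mpr hpar]⟩
    · left; exact ⟨hpar, by simp [hY, hpar]⟩
  rcases hY2 with ⟨⟨k, hk⟩, hY1⟩ | ⟨⟨k, hk⟩, hY1⟩ <;> omega
end

section
/- Let a, c be nonnegative integers with a ≤ c, and suppose integers b, d satisfy 0 ≤ b, 0 ≤ d, a − b ≥ 0, a − b + c − d ≥ 0, 2(a − b) > d and 2b + ⌈d/2⌉ > c. Let Y = 1 if c + ⌈d/2⌉ is odd and Y = 0 otherwise, and define b' = a − b − d + (c + ⌈d/2⌉ − Y)/2, d' = 2⌊d/2⌋ + Y. Then applying the same map to (b', d') (with Y' = 1 iff c + ⌈d'/2⌉ is odd) returns (b, d). -/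
lemma ceil_two_mul (k : ℤ) : ⌈((2 * k : ℤ) : ℚ) / 2⌉ = k := by
  push_cast; rw [mul_comm, mul_div_assoc]; norm_num

lemma floor_two_mul (k : ℤ) : ⌊((2 * k : ℤ) : ℚ) / 2⌋ = k := by
  push_cast; rw [mul_comm, mul_div_assoc]; norm_num

lemma ceil_half : ⌈(1 : ℚ) / 2⌉ = 1 := by
  rw [Int.ceil_eq_iff] <;> norm_num

lemma ceil_two_mul_add_one (k : ℤ) : ⌈((2 * k + 1 : ℤ) : ℚ) / 2⌉ = k + 1 := by
  push_cast
  rw [show ((2:ℚ) * k + 1) / 2 = (1:ℚ)/2 + k by ring, Int.ceil_add_intCast, ceil_half]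
  ring

lemma floor_two_mul_add_one (k : ℤ) : ⌊((2 * k + 1 : ℤ) : ℚ) / 2⌋ = k := by
  push_cast
  rw [show ((2:ℚ) * k + 1) / 2 = (1:ℚ)/2 + k by ring, Int.floor_add_intCast]
  norm_num

theorem stmt_11 (a c b d : ℤ) (ha : 0 ≤ a) (hc : 0 ≤ c) (hac : a ≤ c)
    (hb : 0 ≤ b) (hd : 0 ≤ d) (h1 : 0 ≤ a - b) (h2 : 0 ≤ a - b + c - d)
    (hL1 : 2 * (a - b) > d) (hL2 : 2 * b + ⌈(d : ℚ) / 2⌉ > c)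
    (Y : ℤ) (hY : Y = if Odd (c + ⌈(d : ℚ) / 2⌉) then 1 else 0)
    (b' d' : ℤ) (hb' : 2 * b' = 2 * (a - b - d) + (c + ⌈(d : ℚ) / 2⌉ - Y))
    (hd' : d' = 2 * ⌊(d : ℚ) / 2⌋ + Y)
    (Y' : ℤ) (hY' : Y' = if Odd (c + ⌈(d' : ℚ) / 2⌉) then 1 else 0)
    (b'' d'' : ℤ) (hb'' : 2 * b'' = 2 * (a - b' - d') + (c + ⌈(d' : ℚ) / 2⌉ - Y'))
    (hd'' : d'' = 2 * ⌊(d' : ℚ) / 2⌋ + Y') :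
    b'' = b ∧ d'' = d := by
  simp only [Int.odd_iff] at hY hY'
  rcases Int.even_or_odd d with ⟨k, hk⟩ | ⟨k, hk⟩
  · have hC : ⌈(d : ℚ) / 2⌉ = k := by rw [show d = 2 * k by omega]; exact ceil_two_mul k
    have hF : ⌊(d : ℚ) / 2⌋ = k := by rw [show d = 2 * k by omega]; exact floor_two_mul k
    rw [hC] at hY hb'
    rw [hF] at hd'
    split_ifs at hY with hpar
    · subst hY
      have hC' : ⌈(d' : ℚ) / 2⌉ = k + 1 := by rw [hd']; exact ceil_two_mul_add_one k
      have hF' : ⌊(d' : ℚ) / 2⌋ = k := by rw [hd']; exact floor_two_mul_add_one k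
      rw [hC'] at hY' hb''
      rw [hF'] at hd''
      split_ifs at hY' <;> omega
    · subst hY
      have hC' : ⌈(d' : ℚ) / 2⌉ = k := by rw [hd', show 2 * k + 0 = 2 * k by ring]; exact ceil_two_mul k
      have hF' : ⌊(d' : ℚ) / 2⌋ = k := by rw [hd', show 2 * k + 0 = 2 * k by ring]; exact floor_two_mul k
      rw [hC'] at hY' hb''
      rw [hF'] at hd''
      split_ifs at hY' <;> omega
  · have hC : ⌈(d : ℚ) / 2⌉ = k + 1 := by rw [show d = 2 * k + 1 by omega]; exact ceil_two_mul_add_one k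
    have hF : ⌊(d : ℚ) / 2⌋ = k := by rw [show d = 2 * k + 1 by omega]; exact floor_two_mul_add_one k
    rw [hC] at hY hb'
    rw [hF] at hd'
    split_ifs at hY with hpar
    · subst hY
      have hC' : ⌈(d' : ℚ) / 2⌉ = k + 1 := by rw [hd']; exact ceil_two_mul_add_one k
      have hF' : ⌊(d' : ℚ) / 2⌋ = k := by rw [hd']; exact floor_two_mul_add_one k
      rw [hC'] at hY' hb''
      rw [hF'] at hd''
      split_ifs at hY' <;> omega
    · subst hY
      have hC' : ⌈(d' : ℚ) / 2⌉ = k := by rw [hd', show 2 * k + 0 = 2 * k by ring]; exact ceil_two_mul k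
      have hF' : ⌊(d' : ℚ) / 2⌋ = k := by rw [hd', show 2 * k + 0 = 2 * k by ring]; exact floor_two_mul k
      rw [hC'] at hY' hb''
      rw [hF'] at hd''
      split_ifs at hY' <;> omega
end

section
/- Let a, c be nonnegative integers with a ≤ c, and suppose integers b, d satisfy 0 ≤ b, 0 ≤ d, a − b ≥ 0, a − b + c − d ≥ 0, 2(a − b) > d and 2b + ⌈d/2⌉ > c. Let Y = 1 if c + ⌈d/2⌉ is odd and Y = 0 otherwise, and define b' = a − b − d + (c + ⌈d/2⌉ − Y)/2, d' = 2⌊d/2⌋ + Y. Then 2a − 2b' + c − d' = 2b + ⌈d/2⌉ and 2b' + ⌈d'/2⌉ = 2a − 2b + c − d. -/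
lemma my_floor2 (n : ℤ) : ⌊(n:ℚ)/2⌋ = n / 2 := by
  have := Rat.floor_intCast_div_natCast n 2
  norm_num at this; exact_mod_cast this

lemma my_ceil2 (n : ℤ) : ⌈(n:ℚ)/2⌉ = -((-n) / 2) := by
  rw [show ((n:ℚ)/2) = -(((-n : ℤ):ℚ)/2) by push_cast; ring, Int.ceil_neg, my_floor2]

theorem stmt_12 (a c b d : ℤ) (ha : 0 ≤ a) (hc : 0 ≤ c) (hac : a ≤ c)
    (hb : 0 ≤ b) (hd : 0 ≤ d) (h1 : 0 ≤ a - b) (h2 : 0 ≤ a - b + c - d)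
    (hL1 : 2 * (a - b) > d) (hL2 : 2 * b + ⌈(d : ℚ) / 2⌉ > c)
    (Y : ℤ) (hY : Y = if Odd (c + ⌈(d : ℚ) / 2⌉) then 1 else 0)
    (b' d' : ℤ) (hb' : 2 * b' = 2 * (a - b - d) + (c + ⌈(d : ℚ) / 2⌉ - Y))
    (hd' : d' = 2 * ⌊(d : ℚ) / 2⌋ + Y) :
    2 * a - 2 * b' + c - d' = 2 * b + ⌈(d : ℚ) / 2⌉ ∧
      2 * b' + ⌈(d' : ℚ) / 2⌉ = 2 * a - 2 * b + c - d := by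
  have hY01 : Y = 0 ∨ Y = 1 := by rw [hY]; split <;> simp
  simp only [my_ceil2, my_floor2] at *
  omega
end

section
/- For each partition λ = (λ₁, λ₂, λ₃) of length 3, the generalized q,t-Catalan number C_λ(q,t) = ∑_{k⃗} C_{k⃗}(q,t), where the sum is over the 3! (or fewer) rearrangements k⃗ of λ, is symmetric in q and t. -/
/-- The generalized `q,t`-Catalan number `C_{(k₁,k₂,k₃)}(q,t)`. -/
def genCatalan (k1 k2 k3 : ℕ) (q t : ℚ) : ℚ :=
  ∑ r2 ∈ Finset.range (k1 + 1), ∑ r3 ∈ Finset.range (r2 + k2 + 1),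
    q ^ ((r2 : ℤ) + r3) *
      t ^ (if 2 * min (r2 : ℤ) (k2 : ℤ) ≤ (r2 : ℤ) + k2 - r3 then
             2 * ((k1 : ℤ) - r2) + r2 + k2 - r3 - min (r2 : ℤ) (k2 : ℤ)
           else 2 * ((k1 : ℤ) - r2) + ⌈(((r2 : ℤ) + k2 - r3 : ℤ) : ℚ) / 2⌉)

/-- natural-number version of the bounce statistic -/
def tExp (k1 k2 r2 r3 : ℕ) : ℕ :=
  if 2 * min r2 k2 ≤ r2 + k2 - r3 then 2 * (k1 - r2) + (r2 + k2 - r3) - min r2 k2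
  else 2 * (k1 - r2) + (r2 + k2 - r3 + 1) / 2

def jf (k2 r2 r3 : ℕ) : ℕ := if r2 + r3 ≤ k2 then r2 else (r2 + k2 - r3) / 2

def psi2 (k2 j A : ℕ) : ℕ := if A ≤ k2 then j else j + (A - k2 + 1) / 2

def psi3 (k2 j A : ℕ) : ℕ :=
  if A ≤ k2 then A - j else j + (A - k2 + 1) / 2 + k2 - (2 * j + (A - k2) % 2)

lemma ceil_half_s16 (m : ℤ) (hm : 0 ≤ m) : ⌈(m : ℚ) / 2⌉ = (m + 1) / 2 := by
  rw [show (m : ℚ) / 2 = -(((-m : ℤ) : ℚ) / ((2 : ℕ) : ℚ)) by push_cast; ring,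
    Int.ceil_neg, Rat.floor_intCast_div_natCast]
  omega

lemma exp_eq (k1 k2 r2 r3 : ℕ) (h2 : r2 ≤ k1) (h3 : r3 ≤ r2 + k2) :
    (if 2 * min (r2 : ℤ) (k2 : ℤ) ≤ (r2 : ℤ) + k2 - r3 then
       2 * ((k1 : ℤ) - r2) + r2 + k2 - r3 - min (r2 : ℤ) (k2 : ℤ)
     else 2 * ((k1 : ℤ) - r2) + ⌈(((r2 : ℤ) + k2 - r3 : ℤ) : ℚ) / 2⌉)
    = (tExp k1 k2 r2 r3 : ℤ) := by
  rw [ceil_half_s16 _ (by omega)]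
  unfold tExp
  split_ifs with h h' <;> omega

lemma genCatalan_eq (k1 k2 k3 : ℕ) (u v : ℚ) :
    genCatalan k1 k2 k3 u v =
      ∑ p ∈ (Finset.range (k1 + 1)).sigma (fun r2 => Finset.range (r2 + k2 + 1)),
        u ^ (p.1 + p.2) * v ^ (tExp k1 k2 p.1 p.2) := by
  unfold genCatalan
  rw [Finset.sum_sigma']
  refine Finset.sum_congr rfl fun p hp => ?_
  simp only [Finset.mem_sigma, Finset.mem_range] at hp
  rw [exp_eq k1 k2 p.1 p.2 (by omega) (by omega),
    show ((p.1 : ℤ) + p.2) = ((p.1 + p.2 : ℕ) : ℤ) by push_cast; ring,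
    zpow_natCast, zpow_natCast]

lemma sumYZ (k1 k2 : ℕ) (hk2 : 1 ≤ k2) (u v : ℚ) :
    ∑ p ∈ ((Finset.range (k1 + 1)).sigma (fun r2 => Finset.range (r2 + k2 + 1))).filter
        (fun p => ¬ (k2 + p.2 ≤ p.1)),
      u ^ (p.1 + p.2) * v ^ (tExp k1 k2 p.1 p.2) =
    ∑ w ∈ (Finset.range (min k1 (k2 - 1) + 1)).sigma
        (fun j => Finset.Ico j (2 * k1 + k2 - 2 * j + 1)),
      u ^ w.2 * v ^ (2 * k1 + k2 - w.1 - w.2) := by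
  refine Finset.sum_nbij' (fun p => ⟨jf k2 p.1 p.2, p.1 + p.2⟩)
    (fun w => ⟨psi2 k2 w.1 w.2, psi3 k2 w.1 w.2⟩) ?_ ?_ ?_ ?_ ?_
  · rintro ⟨r2, r3⟩ hp
    simp only [Finset.mem_filter, Finset.mem_sigma, Finset.mem_range, Finset.mem_Ico] at hp ⊢
    unfold jf; split_ifs <;> omega
  · rintro ⟨j, A⟩ hw
    simp only [Finset.mem_filter, Finset.mem_sigma, Finset.mem_range, Finset.mem_Ico] at hw ⊢
    unfold psi2 psi3; split_ifs <;> omega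
  · rintro ⟨r2, r3⟩ hp
    simp only [Finset.mem_filter, Finset.mem_sigma, Finset.mem_range] at hp
    have h1 : psi2 k2 (jf k2 r2 r3) (r2 + r3) = r2 := by
      unfold psi2 jf; split_ifs <;> omega
    have h2 : psi3 k2 (jf k2 r2 r3) (r2 + r3) = r3 := by
      unfold psi3 jf; split_ifs <;> omega
    simp [h1, h2]
  · rintro ⟨j, A⟩ hw
    simp only [Finset.mem_sigma, Finset.mem_range, Finset.mem_Ico] at hw
    have h1 : jf k2 (psi2 k2 j A) (psi3 k2 j A) = j := by
      unfold psi2 psi3 jf; split_ifs <;> omega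
    have h2 : psi2 k2 j A + psi3 k2 j A = A := by
      unfold psi2 psi3; split_ifs <;> omega
    simp [h1, h2]
  · rintro ⟨r2, r3⟩ hp
    simp only [Finset.mem_filter, Finset.mem_sigma, Finset.mem_range] at hp
    have h1 : tExp k1 k2 r2 r3 = 2 * k1 + k2 - jf k2 r2 r3 - (r2 + r3) := by
      unfold tExp jf; split_ifs <;> omega
    rw [h1]

lemma sumT (k1 k2 : ℕ) (u v : ℚ) :
    ∑ w ∈ (Finset.range (min k1 (k2 - 1) + 1)).sigma
        (fun j => Finset.Ico j (2 * k1 + k2 - 2 * j + 1)),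
      u ^ w.2 * v ^ (2 * k1 + k2 - w.1 - w.2) =
    ∑ w ∈ (Finset.range (min k1 (k2 - 1) + 1)).sigma
        (fun j => Finset.Ico j (2 * k1 + k2 - 2 * j + 1)),
      v ^ w.2 * u ^ (2 * k1 + k2 - w.1 - w.2) := by
  refine Finset.sum_nbij' (fun w => ⟨w.1, 2 * k1 + k2 - w.1 - w.2⟩)
    (fun w => ⟨w.1, 2 * k1 + k2 - w.1 - w.2⟩) ?_ ?_ ?_ ?_ ?_ <;>
    rintro ⟨j, A⟩ hw <;>
    simp only [Finset.mem_sigma, Finset.mem_range, Finset.mem_Ico] at hw ⊢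
  · omega
  · omega
  · rw [show 2 * k1 + k2 - j - (2 * k1 + k2 - j - A) = A from by omega]
  · rw [show 2 * k1 + k2 - j - (2 * k1 + k2 - j - A) = A from by omega]
  · rw [show 2 * k1 + k2 - j - (2 * k1 + k2 - j - A) = A from by omega, mul_comm]

lemma genCatalan_symm (k1 k2 k3 : ℕ) (hk2 : 1 ≤ k2) (q t : ℚ) :
    genCatalan k1 k2 k3 q t = genCatalan k1 k2 k3 t q := by
  rw [genCatalan_eq, genCatalan_eq]
  rw [← Finset.sum_filter_add_sum_filter_not
      ((Finset.range (k1 + 1)).sigma (fun r2 => Finset.range (r2 + k2 + 1)))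
      (fun p => k2 + p.2 ≤ p.1)
      (fun (p : (_ : ℕ) × ℕ) => q ^ (p.1 + p.2) * t ^ (tExp k1 k2 p.1 p.2)),
    ← Finset.sum_filter_add_sum_filter_not
      ((Finset.range (k1 + 1)).sigma (fun r2 => Finset.range (r2 + k2 + 1)))
      (fun p => k2 + p.2 ≤ p.1)
      (fun (p : (_ : ℕ) × ℕ) => t ^ (p.1 + p.2) * q ^ (tExp k1 k2 p.1 p.2))]
  congr 1
  · -- region X : involution (r2,r3) ↦ (k1-r3, k1-r2)
    refine Finset.sum_nbij' (fun p => ⟨k1 - p.2, k1 - p.1⟩) (fun p => ⟨k1 - p.2, k1 - p.1⟩)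
      ?_ ?_ ?_ ?_ ?_ <;>
      rintro ⟨r2, r3⟩ hp <;>
      simp only [Finset.mem_filter, Finset.mem_sigma, Finset.mem_range] at hp ⊢
    · omega
    · omega
    · rw [show k1 - (k1 - r3) = r3 from by omega, show k1 - (k1 - r2) = r2 from by omega]
    · rw [show k1 - (k1 - r3) = r3 from by omega, show k1 - (k1 - r2) = r2 from by omega]
    · have h1 : tExp k1 k2 r2 r3 = 2 * k1 - (r2 + r3) := by
        unfold tExp; split_ifs <;> omega
      have h2 : tExp k1 k2 (k1 - r3) (k1 - r2) = r2 + r3 := by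
        unfold tExp; split_ifs <;> omega
      have h3 : (k1 - r3) + (k1 - r2) = 2 * k1 - (r2 + r3) := by omega
      rw [h1, h2, h3, mul_comm]
  · rw [sumYZ k1 k2 hk2 q t, sumT, ← sumYZ k1 k2 hk2 t q]

theorem stmt_16 (l1 l2 l3 : ℕ) (h12 : l2 ≤ l1) (h23 : l3 ≤ l2) (h3 : 1 ≤ l3) (q t : ℚ) :
    (∑ k ∈ ((Finset.range (l1 + 1)) ×ˢ (Finset.range (l1 + 1)) ×ˢ
          (Finset.range (l1 + 1))).filter
        (fun k => ({k.1, k.2.1, k.2.2} : Multiset ℕ) = {l1, l2, l3}),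
        genCatalan k.1 k.2.1 k.2.2 q t) =
      ∑ k ∈ ((Finset.range (l1 + 1)) ×ˢ (Finset.range (l1 + 1)) ×ˢ
          (Finset.range (l1 + 1))).filter
        (fun k => ({k.1, k.2.1, k.2.2} : Multiset ℕ) = {l1, l2, l3}),
        genCatalan k.1 k.2.1 k.2.2 t q := by
  refine Finset.sum_congr rfl fun k hk => ?_
  simp only [Finset.mem_filter] at hk
  have hmem : k.2.1 ∈ ({l1, l2, l3} : Multiset ℕ) := by
    rw [← hk.2]
    simp
  have : k.2.1 = l1 ∨ k.2.1 = l2 ∨ k.2.1 = l3 := by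
    simpa using hmem
  exact genCatalan_symm k.1 k.2.1 k.2.2 (by omega) q t
end

section
/- As formal power series in x₁, x₂, x₃, the generating function ∑_{k₁,k₂,k₃ ≥ 0} x₁^{k₁} x₂^{k₂} x₃^{k₃} C_{(k₁,k₂,k₃)}(q,t) equals (1 − q t² x₁x₂)(1 − q² t x₁x₂) / [(1 − q x₂)(1 − t x₂)(1 − q t x₁)(1 − t² x₁)(1 − q² x₁)(1 − q t x₁x₂)(1 − x₃)]. -/
/-!
`C_{(k₁,k₂,k₃)}` does not depend on `k₃`, and its outer sum over `r₂` is `∑ t^{2(k₁-r₂)} I(r₂,k₂)`,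
which contributes the factor `1/(1 - t² x₁)`. So everything rests on the generating function of
the inner sums `I(a,b) = ∑_{r₃} q^{a+r₃} t^{bounce}`. Peeling off the first one or two terms of
such a sum gives the recurrences
`I(a,b+1) = q I(a,b) + q^a t^{b+1}` for `a ≤ b`,
`I(a+1,b) = q² I(a,b) + q^{a+1} t^{a+1}` for `b ≤ a`, and
`I(a+1,a+1) = q³ I(a,a) + (q^{a+2} + q^{a+1}) t^{a+1}`.
Split the generating function of `I` into its parts above, below and on the diagonal: each
recurrence becomes an identity of power series after multiplying by `1 - q x₂`, `1 - q² x₁`, or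
`(1 - q³ x₁x₂)(1 - q t x₁x₂)`, and the inhomogeneous terms are geometric series in `t x₂`, `q t x₁`
and `q t x₁x₂`.
-/

namespace GenCatalan

open Finset

/-- The bounce statistic without its `2 (k₁ - r₂)` part, as a function of `s = r₂ + k₂ - r₃` and
`m = min r₂ k₂`. -/
def bounce (s m : ℕ) : ℕ := if 2 * m ≤ s then s - m else (s + 1) / 2

theorem bounce_of_le {s m : ℕ} (h : 2 * m ≤ s) : bounce s m = s - m := if_pos h

theorem bounce_succ_of_le {s m : ℕ} (h : s ≤ 2 * m) : bounce s (m + 1) = bounce s m := by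
  unfold bounce
  split_ifs <;> omega

section Sums

variable {R : Type*} [CommSemiring R] (q t : R)

/-- The inner sum over `r₃` in `C_{(a,b,k₃)}` for `r₂ = a`, without the factor
`t ^ (2 (k₁ - r₂))`. -/
def innerSum (a b : ℕ) : R :=
  ∑ r ∈ range (a + b + 1), q ^ (a + r) * t ^ bounce (a + b - r) (min a b)

def outerSum (a b : ℕ) : R :=
  ∑ r ∈ range (a + 1), t ^ (2 * (a - r)) * innerSum q t r b

@[simp] theorem innerSum_zero_zero : innerSum q t 0 0 = 1 := by
  simp [innerSum, bounce]

theorem innerSum_succ_right {a b : ℕ} (h : a ≤ b) :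
    innerSum q t a (b + 1) = q * innerSum q t a b + q ^ a * t ^ (b + 1) := by
  rw [innerSum, show a + (b + 1) + 1 = a + b + 1 + 1 by omega, sum_range_succ', innerSum, mul_sum,
    min_eq_left h, min_eq_left (by omega), bounce_of_le (by omega)]
  congr 1
  · refine sum_congr rfl fun r _ => ?_
    rw [show a + (b + 1) - (r + 1) = a + b - r by omega, pow_add, pow_add, pow_succ]
    ring
  · rw [add_zero, show a + (b + 1) - 0 - a = b + 1 by omega]

theorem innerSum_succ_left {a b : ℕ} (h : b ≤ a) :
    innerSum q t (a + 1) b = q ^ 2 * innerSum q t a b + q ^ (a + 1) * t ^ (a + 1) := by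
  rw [innerSum, show a + 1 + b + 1 = a + b + 1 + 1 by omega, sum_range_succ', innerSum, mul_sum,
    min_eq_right h, min_eq_right (by omega), bounce_of_le (by omega)]
  congr 1
  · refine sum_congr rfl fun r _ => ?_
    rw [show a + 1 + b - (r + 1) = a + b - r by omega, pow_add, pow_add, pow_succ]
    ring
  · rw [add_zero, show a + 1 + b - 0 - b = a + 1 by omega]

theorem innerSum_succ_succ (a : ℕ) :
    innerSum q t (a + 1) (a + 1) =
      q ^ 3 * innerSum q t a a + (q ^ (a + 2) + q ^ (a + 1)) * t ^ (a + 1) := by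
  rw [innerSum, show a + 1 + (a + 1) + 1 = a + a + 1 + 1 + 1 by omega, sum_range_succ',
    sum_range_succ', add_assoc, innerSum, mul_sum, min_self, min_self]
  congr 1
  · refine sum_congr rfl fun r hr => ?_
    rw [mem_range] at hr
    rw [show a + 1 + (a + 1) - (r + 1 + 1) = a + a - r by omega,
      bounce_succ_of_le (by omega), pow_add, pow_add q a]
    ring
  · have hbounce : ∀ r ≤ 1, bounce (a + 1 + (a + 1) - r) (a + 1) = a + 1 := by
      intro r hr
      unfold bounce
      split_ifs <;> omega
    rw [hbounce 1 le_rfl, hbounce 0 zero_le_one]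
    ring

@[simp] theorem outerSum_zero (b : ℕ) : outerSum q t 0 b = innerSum q t 0 b := by
  simp [outerSum]

theorem outerSum_succ (a b : ℕ) :
    outerSum q t (a + 1) b = t ^ 2 * outerSum q t a b + innerSum q t (a + 1) b := by
  rw [outerSum, sum_range_succ, Nat.sub_self, mul_zero, pow_zero, one_mul, outerSum, mul_sum]
  congr 1
  refine sum_congr rfl fun r hr => ?_
  rw [mem_range] at hr
  rw [show 2 * (a + 1 - r) = 2 + 2 * (a - r) by omega, pow_add, mul_assoc]

end Sums

theorem genCatalan_eq_outerSum (k1 k2 k3 : ℕ) (q t : ℚ) :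
    genCatalan k1 k2 k3 q t = outerSum q t k1 k2 := by
  refine sum_congr rfl fun r2 hr2 => ?_
  rw [innerSum, mul_sum]
  refine sum_congr rfl fun r3 hr3 => ?_
  rw [mem_range] at hr2 hr3
  have hexp : (if 2 * min (r2 : ℤ) (k2 : ℤ) ≤ (r2 : ℤ) + k2 - r3 then
        2 * ((k1 : ℤ) - r2) + r2 + k2 - r3 - min (r2 : ℤ) (k2 : ℤ)
      else 2 * ((k1 : ℤ) - r2) + ⌈(((r2 : ℤ) + k2 - r3 : ℤ) : ℚ) / 2⌉) =
      ((2 * (k1 - r2) + bounce (r2 + k2 - r3) (min r2 k2) : ℕ) : ℤ) := by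
    rw [show (2 : ℚ) = (2 : ℕ) by norm_num, Rat.ceil_intCast_div_natCast, bounce]
    split_ifs <;> omega
  rw [hexp, show (r2 : ℤ) + r3 = ((r2 + r3 : ℕ) : ℤ) by push_cast; ring, zpow_natCast,
    zpow_natCast, pow_add, pow_add]
  ring

section PowerSeries

open MvPowerSeries
open Finsupp (single single_apply single_le_iff)

variable {σ R : Type*} [CommRing R]

theorem coeff_mul_one_sub_monomial (φ : MvPowerSeries σ R) (v n : σ →₀ ℕ) (r : R) :
    coeff n (φ * (1 - monomial v r)) = coeff n φ - if v ≤ n then r * coeff (n - v) φ else 0 := by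
  rw [mul_sub, mul_one, map_sub, coeff_mul_monomial]
  split_ifs <;> ring

/-- The series in `x₁ = X 0`, `x₂ = X 1` with coefficient array `c`. -/
def planar (c : ℕ → ℕ → R) : MvPowerSeries (Fin 3) R :=
  fun n => if n 2 = 0 then c (n 0) (n 1) else 0

theorem coeff_planar (c : ℕ → ℕ → R) (n : Fin 3 →₀ ℕ) :
    coeff n (planar c) = if n 2 = 0 then c (n 0) (n 1) else 0 := rfl

theorem planar_add (c d : ℕ → ℕ → R) : planar c + planar d = planar (c + d) := by
  ext n
  simp only [map_add, coeff_planar, Pi.add_apply]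
  split_ifs <;> simp

theorem planar_sub (c d : ℕ → ℕ → R) : planar c - planar d = planar (c - d) := by
  ext n
  simp only [map_sub, coeff_planar, Pi.sub_apply]
  split_ifs <;> simp

theorem mul_one_sub_X_two {φ : MvPowerSeries (Fin 3) R} {c : ℕ → ℕ → R}
    (hφ : ∀ n, coeff n φ = c (n 0) (n 1)) : φ * (1 - X 2) = planar c := by
  ext n
  rw [X_def, coeff_mul_one_sub_monomial, coeff_planar, hφ, hφ]
  by_cases h : n 2 = 0 <;> simp [h, single_le_iff, Nat.one_le_iff_ne_zero]

theorem single_add_single_le_iff {i j : ℕ} {n : Fin 3 →₀ ℕ} :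
    single 0 i + single 1 j ≤ n ↔ i ≤ n 0 ∧ j ≤ n 1 := by
  simp [Finsupp.le_def, Fin.forall_fin_succ]

theorem planar_mul_one_sub_monomial (c : ℕ → ℕ → R) (i j : ℕ) (r : R) :
    planar c * (1 - monomial (single 0 i + single 1 j) r) =
      planar fun a b => c a b - if i ≤ a ∧ j ≤ b then r * c (a - i) (b - j) else 0 := by
  ext n
  simp only [coeff_mul_one_sub_monomial, coeff_planar, single_add_single_le_iff,
    Finsupp.tsub_apply, Finsupp.add_apply, single_apply]
  by_cases h : n 2 = 0 <;> simp [h]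

theorem monomial_eq_planar (i j : ℕ) (r : R) :
    monomial (single 0 i + single 1 j) r = planar fun a b => if a = i ∧ b = j then r else 0 := by
  ext n
  rw [coeff_monomial, coeff_planar]
  by_cases h : n 2 = 0 <;> simp [h, Finsupp.ext_iff, Fin.forall_fin_succ]

theorem one_eq_planar :
    (1 : MvPowerSeries (Fin 3) R) = planar fun a b => if a = 0 ∧ b = 0 then 1 else 0 := by
  rw [← monomial_eq_planar]
  simp

theorem C_mul_X_pow_mul_X_pow (i j : ℕ) (r : R) :
    (C r * (X 0 ^ i * X 1 ^ j) : MvPowerSeries (Fin 3) R) =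
      monomial (single 0 i + single 1 j) r := by
  rw [X_pow_eq, X_pow_eq, monomial_mul_monomial, ← monomial_zero_eq_C_apply, monomial_mul_monomial]
  simp

theorem C_mul_X_zero (r : R) :
    (C r * X 0 : MvPowerSeries (Fin 3) R) = monomial (single 0 1 + single 1 0) r := by
  simpa using C_mul_X_pow_mul_X_pow 1 0 r

theorem C_mul_X_one (r : R) :
    (C r * X 1 : MvPowerSeries (Fin 3) R) = monomial (single 0 0 + single 1 1) r := by
  simpa using C_mul_X_pow_mul_X_pow 0 1 r

theorem C_mul_X_zero_mul_X_one (r : R) :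
    (C r * (X 0 * X 1) : MvPowerSeries (Fin 3) R) = monomial (single 0 1 + single 1 1) r := by
  simpa using C_mul_X_pow_mul_X_pow 1 1 r

variable (q t : R)

theorem planar_outerSum_mul :
    planar (outerSum q t) * (1 - C (t ^ 2) * X 0) = planar (innerSum q t) := by
  rw [C_mul_X_zero, planar_mul_one_sub_monomial]
  congr 1
  funext a b
  rcases a with _ | a <;> simp [outerSum_succ]

theorem planar_innerSum_eq :
    planar (innerSum q t) =
      planar (fun a b => if a ≤ b then innerSum q t a b else 0) +
        planar (fun a b => if b ≤ a then innerSum q t a b else 0) -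
        planar (fun a b => if a = b then innerSum q t a b else 0) := by
  rw [planar_add, planar_sub]
  congr 1
  funext a b
  simp only [Pi.add_apply, Pi.sub_apply]
  split_ifs <;> first | omega | ring

theorem planar_upper_mul :
    planar (fun a b => if a ≤ b then innerSum q t a b else 0) * (1 - C q * X 1) =
      planar (fun a b => if a = b then innerSum q t a b else 0) +
        planar (fun a b => if a < b then q ^ a * t ^ b else 0) := by
  rw [C_mul_X_one, planar_mul_one_sub_monomial, planar_add]
  congr 1
  funext a b
  rcases b with _ | b
  · simp [eq_comm]
  · simp only [Pi.add_apply, Nat.sub_zero, Nat.add_sub_cancel]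
    split_ifs <;>
      first | omega | ring1 | linear_combination innerSum_succ_right q t (by omega : a ≤ b)

theorem planar_lower_mul :
    planar (fun a b => if b ≤ a then innerSum q t a b else 0) * (1 - C (q ^ 2) * X 0) =
      planar (fun a b => if a = b then innerSum q t a b else 0) +
        planar (fun a b => if b < a then q ^ a * t ^ a else 0) := by
  rw [C_mul_X_zero, planar_mul_one_sub_monomial, planar_add]
  congr 1
  funext a b
  rcases a with _ | a
  · simp [eq_comm]
  · simp only [Pi.add_apply, Nat.sub_zero, Nat.add_sub_cancel]
    split_ifs <;>
      first | omega | ring1 | linear_combination innerSum_succ_left q t (by omega : b ≤ a)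

theorem planar_diag_mul :
    planar (fun a b => if a = b then innerSum q t a b else 0) * (1 - C (q ^ 3) * (X 0 * X 1)) *
      (1 - C (q * t) * (X 0 * X 1)) = 1 + C (q ^ 2 * t) * (X 0 * X 1) := by
  simp only [C_mul_X_zero_mul_X_one, planar_mul_one_sub_monomial]
  rw [one_eq_planar, monomial_eq_planar, planar_add]
  congr 1
  funext a b
  rcases a with _ | _ | a <;> rcases b with _ | _ | b <;> simp
  · have h := innerSum_succ_succ q t 0
    simp only [innerSum_zero_zero, zero_add, pow_one, mul_one] at h
    linear_combination h
  · split_ifs with h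
    · subst h
      linear_combination innerSum_succ_succ q t (a + 1) - q * t * innerSum_succ_succ q t a
    · ring

theorem planar_upper_geom_mul :
    planar (fun a b => if a < b then q ^ a * t ^ b else 0) * (1 - C t * X 1) *
      (1 - C (q * t) * (X 0 * X 1)) = C t * X 1 := by
  simp only [C_mul_X_zero_mul_X_one, C_mul_X_one, planar_mul_one_sub_monomial]
  rw [monomial_eq_planar]
  congr 1
  funext a b
  rcases a with _ | a <;> rcases b with _ | _ | b <;> simp <;>
    (try split_ifs) <;> first | omega | ring1

theorem planar_lower_geom_mul :
    planar (fun a b => if b < a then q ^ a * t ^ a else 0) * (1 - C (q * t) * X 0) *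
      (1 - C (q * t) * (X 0 * X 1)) = C (q * t) * X 0 := by
  simp only [C_mul_X_zero_mul_X_one, C_mul_X_zero, planar_mul_one_sub_monomial]
  rw [monomial_eq_planar]
  congr 1
  funext a b
  rcases a with _ | _ | a <;> rcases b with _ | b <;> simp <;>
    (try split_ifs) <;> first | omega | ring1

theorem planar_innerSum_mul :
    planar (innerSum q t) * ((1 - C q * X 1) * (1 - C t * X 1) * (1 - C (q * t) * X 0) *
        (1 - C (q ^ 2) * X 0) * (1 - C (q * t) * (X 0 * X 1))) =
      (1 - C (q * t ^ 2) * (X 0 * X 1)) * (1 - C (q ^ 2 * t) * (X 0 * X 1)) := by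
  have hU := planar_upper_mul q t
  have hW := planar_lower_mul q t
  have hD := planar_diag_mul q t
  have hU' := planar_upper_geom_mul q t
  have hW' := planar_lower_geom_mul q t
  rw [planar_innerSum_eq]
  simp only [map_mul, map_pow] at *
  -- the `q³` of the diagonal cancels because `(1 - q x₂) + (1 - q² x₁) - (1 - q x₂)(1 - q² x₁)`
  -- is `1 - q³ x₁x₂`
  linear_combination
    (1 - C t * X 1) * (1 - C q * C t * X 0) * (1 - C q * C t * (X 0 * X 1)) *
        ((1 - C q ^ 2 * X 0) * hU + (1 - C q * X 1) * hW) +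
      (1 - C t * X 1) * (1 - C q * C t * X 0) * hD +
      (1 - C q * C t * X 0) * (1 - C q ^ 2 * X 0) * hU' + (1 - C q * X 1) * (1 - C t * X 1) * hW'

end PowerSeries

end GenCatalan

open MvPowerSeries in
theorem stmt_17 (q t : ℚ) :
    let F : MvPowerSeries (Fin 3) ℚ := fun n => genCatalan (n 0) (n 1) (n 2) q t
    let x1 : MvPowerSeries (Fin 3) ℚ := X 0
    let x2 : MvPowerSeries (Fin 3) ℚ := X 1
    let x3 : MvPowerSeries (Fin 3) ℚ := X 2
    let Cc : ℚ → MvPowerSeries (Fin 3) ℚ := MvPowerSeries.C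
    F * ((1 - Cc q * x2) * (1 - Cc t * x2) * (1 - Cc (q * t) * x1) *
          (1 - Cc (t ^ 2) * x1) * (1 - Cc (q ^ 2) * x1) * (1 - Cc (q * t) * (x1 * x2)) *
          (1 - x3)) =
      (1 - Cc (q * t ^ 2) * (x1 * x2)) * (1 - Cc (q ^ 2 * t) * (x1 * x2)) := by
  intro F x1 x2 x3 Cc
  have hF : F * (1 - x3) = GenCatalan.planar (GenCatalan.outerSum q t) :=
    GenCatalan.mul_one_sub_X_two fun n => GenCatalan.genCatalan_eq_outerSum (n 0) (n 1) (n 2) q t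
  calc _ = F * (1 - x3) * (1 - Cc (t ^ 2) * x1) * ((1 - Cc q * x2) * (1 - Cc t * x2) *
          (1 - Cc (q * t) * x1) * (1 - Cc (q ^ 2) * x1) * (1 - Cc (q * t) * (x1 * x2))) := by ring
    _ = _ := by
      rw [hF, GenCatalan.planar_outerSum_mul, GenCatalan.planar_innerSum_mul]
end

section
/- Let a, c be nonnegative integers with a > c, and consider the set S = {(b,d) ∈ ℤ≥0 × ℤ≥0 : b ≤ a, d ≤ a − b + c}, with area(b,d) = 2a − 2b + c − d and bounce(b,d) = 2b − c + d if a − b > c and 2c ≤ d; 3b + d − a if a − b ≤ c and 2(a−b) ≤ d; 2b + ⌈d/2⌉ if min(2(a−b), 2c) > d. If a − b > c, 2c ≤ d, and not (b = 0 and d = 2c), then (b', d') = (a − b + c − d, d) lies in S, satisfies a − b' > c and 2c ≤ d', and area(b',d') = bounce(b,d) and bounce(b',d') = area(b,d). -/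
theorem stmt_18 (a c e : ℕ) (hac : c < a)
    (b d : ℤ) (hb : 0 ≤ b) (hd : 0 ≤ d) (h1 : b ≤ (a : ℤ)) (h2 : d ≤ (a : ℤ) - b + c)
    (hG1 : (a : ℤ) - b > c) (hG2 : 2 * (c : ℤ) ≤ d) (hG3 : ¬(b = 0 ∧ d = 2 * c))
    (b' d' : ℤ) (hb' : b' = (a : ℤ) - b + c - d) (hd' : d' = d) :
    (let area : ℤ × ℤ → ℤ := fun p => 2 * (a : ℤ) - 2 * p.1 + c - p.2
     let bounce : ℤ × ℤ → ℤ := fun p =>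
       if (a : ℤ) - p.1 > c ∧ 2 * (c : ℤ) ≤ p.2 then 2 * p.1 - c + p.2
       else if (a : ℤ) - p.1 ≤ c ∧ 2 * ((a : ℤ) - p.1) ≤ p.2 then 3 * p.1 + p.2 - a
       else 2 * p.1 + ⌈(p.2 : ℚ) / 2⌉
     (0 ≤ b' ∧ 0 ≤ d' ∧ b' ≤ (a : ℤ) ∧ d' ≤ (a : ℤ) - b' + c) ∧
       ((a : ℤ) - b' > c ∧ 2 * (c : ℤ) ≤ d') ∧
       area (b', d') = bounce (b, d) ∧ bounce (b', d') = area (b, d)) := by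
  rw [hb', hd']
  have hcond : (a : ℤ) - ((a : ℤ) - b + c - d) > c ∧ 2 * (c : ℤ) ≤ d := by
    constructor
    · rcases eq_or_lt_of_le hb with hb0 | hb0
      · have : d ≠ 2 * c := fun hdc => hG3 ⟨hb0.symm, hdc⟩
        omega
      · omega
    · exact hG2
  simp only
  rw [if_pos hcond, if_pos ⟨hG1, hG2⟩]
  refine ⟨⟨by omega, hd, by omega, by omega⟩, hcond, by ring, by ring⟩
end
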